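/- arXiv:math/0702577 — 4 statements merged into one kernel-verified Lean document; each statement's English description precedes it below -/
import Mathlib

section
/- The map R(β1,β2) : (x,y) ↦ (p,q) on ℂ²×ℂ² defined by p=(y¹·P⁻¹, y²·P) and q=(x¹·P, x²+y²·(1−P)), where P = 1 + (β1−β2)/(x¹−y²), is unitary: for all x,y ∈ ℂ² with all occurring denominators nonzero, if R(β1,β2)(x,y) = (p,q) then R(β2,β1)(q,p) = (y,x). -/
noncomputable section

abbrev X2 : Type := ℂ × ℂ

/-- `P = 1 + (β1−β2)/(x¹−y²)` for `z = ((x¹,x²),(y¹,y²))`. -/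
def Pval (β1 β2 : ℂ) (z : X2 × X2) : ℂ :=
  1 + (β1 - β2) / (z.1.1 - z.2.2)

/-- The Yang–Baxter map `R(β1,β2) : (x,y) ↦ (p,q)` with
`p = (y¹·P⁻¹, y²·P)`, `q = (x¹·P, x² + y²·(1−P))`. -/
def R (β1 β2 : ℂ) (z : X2 × X2) : X2 × X2 :=
  ((z.2.1 * (Pval β1 β2 z)⁻¹, z.2.2 * Pval β1 β2 z),
   (z.1.1 * Pval β1 β2 z, z.1.2 + z.2.2 * (1 - Pval β1 β2 z)))

/-- All denominators occurring in `R(β1,β2)` are nonzero at `z`. -/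
def D (β1 β2 : ℂ) (z : X2 × X2) : Prop :=
  z.1.1 - z.2.2 ≠ 0 ∧ Pval β1 β2 z ≠ 0

/-- Unitarity of the Yang–Baxter map obtained from the lattice nonlinear
Schrödinger system: if `R(β1,β2)(x,y) = (p,q)`, then `R(β2,β1)(q,p) = (y,x)`,
wherever all occurring denominators are nonzero. -/
theorem unitarity_E1 (β1 β2 : ℂ) (x y : X2)
    (h1 : D β1 β2 (x, y))
    (h2 : D β2 β1 ((R β1 β2 (x, y)).2, (R β1 β2 (x, y)).1)) :
    R β2 β1 ((R β1 β2 (x, y)).2, (R β1 β2 (x, y)).1) = (y, x) := by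
  obtain ⟨hd, hP⟩ := h1
  simp only [R, Pval, D] at *
  clear h2
  have hn : x.1 - y.2 + (β1 - β2) ≠ 0 := by
    have h := mul_ne_zero hd hP
    intro hc
    apply h
    field_simp
    linear_combination hc
  have hden : x.1 * (1 + (β1 - β2) / (x.1 - y.2)) - y.2 * (1 + (β1 - β2) / (x.1 - y.2))
      = x.1 - y.2 + (β1 - β2) := by
    field_simp
  have key : 1 + (β2 - β1) / (x.1 * (1 + (β1 - β2) / (x.1 - y.2)) - y.2 * (1 + (β1 - β2) / (x.1 - y.2)))
      = (1 + (β1 - β2) / (x.1 - y.2))⁻¹ := by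
    rw [hden, inv_eq_one_div]
    field_simp
    ring
  rw [key]
  ext <;> simp only [] <;> field_simp <;> ring
end
end

section
/- Let W(ξ¹,ξ²,β,λ) denote the 2×2 complex matrix with rows (ξ¹, −ξ¹·ξ²) and (1, λ−β−ξ²). Let x=(x¹,x²), y=(y¹,y²) ∈ ℂ², let β1,β2 ∈ ℂ with x¹−y² ≠ 0 and x¹−y²+β1−β2 ≠ 0, set P = 1 + (β1−β2)/(x¹−y²), and define p=(y¹·P⁻¹, y²·P), q=(x¹·P, x²+y²·(1−P)). Then for every λ ∈ ℂ the discrete zero-curvature relation W(y¹,y²,β2,λ)·W(x¹,x²,β1,λ) = W(p¹,p²,β1,λ)·W(q¹,q²,β2,λ) holds. -/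
noncomputable section

/-- The Lax matrix `W(ξ¹,ξ²,β,λ) = [[ξ¹, −ξ¹·ξ²],[1, λ−β−ξ²]]` of the
Yang–Baxter map obtained from the lattice nonlinear Schrödinger system. -/
def W (ξ1 ξ2 β lam : ℂ) : Matrix (Fin 2) (Fin 2) ℂ :=
  !![ξ1, -(ξ1 * ξ2); 1, lam - β - ξ2]

/-- The discrete zero-curvature (Lax) representation
`W(y¹,y²,β2,λ)·W(x¹,x²,β1,λ) = W(p¹,p²,β1,λ)·W(q¹,q²,β2,λ)` of the Yang–Baxter
map `p = (y¹·P⁻¹, y²·P)`, `q = (x¹·P, x²+y²·(1−P))`, `P = 1+(β1−β2)/(x¹−y²)`. -/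
theorem zero_curvature_E1 (x1 x2 y1 y2 β1 β2 : ℂ)
    (hd1 : x1 - y2 ≠ 0) (hd2 : x1 - y2 + β1 - β2 ≠ 0)
    (P : ℂ) (hP : P = 1 + (β1 - β2) / (x1 - y2))
    (p1 p2 q1 q2 : ℂ)
    (hp1 : p1 = y1 * P⁻¹) (hp2 : p2 = y2 * P)
    (hq1 : q1 = x1 * P) (hq2 : q2 = x2 + y2 * (1 - P)) :
    ∀ lam : ℂ, W y1 y2 β2 lam * W x1 x2 β1 lam = W p1 p2 β1 lam * W q1 q2 β2 lam := by
  intro lam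
  have hPval : P = (x1 - y2 + β1 - β2) / (x1 - y2) := by
    rw [hP]; field_simp; ring
  have hPne : P ≠ 0 := by
    rw [hPval]; exact div_ne_zero hd2 hd1
  subst hp1 hp2 hq1 hq2
  rw [hPval] at *
  unfold W
  ext i j
  fin_cases i <;> fin_cases j <;>
    simp [Matrix.mul_apply, Fin.sum_univ_succ] <;> field_simp <;> ring
end
end

section
/- Consider data ((f₀,f₁,f₂,f₃),(α₁,α₂,α₃)) ∈ (ℂ²)⁴ × ℂ³, where fⱼ=(uⱼ,vⱼ), and define the maps B₁ and B₂ as follows: B₁ replaces f₁ by (u₁ + (α₁−α₂)·u₀/(1−u₀·v₂), v₁ − (α₁−α₂)·v₂/(1−u₀·v₂)) and swaps α₁ ↔ α₂, leaving f₀,f₂,f₃,α₃ unchanged; B₂ replaces f₂ by (u₂ + (α₂−α₃)·u₁/(1−u₁·v₃), v₂ − (α₂−α₃)·v₃/(1−u₁·v₃)) and swaps α₂ ↔ α₃, leaving f₀,f₁,f₃,α₁ unchanged. Then the braid relation B₂ ∘ B₁ ∘ B₂ = B₁ ∘ B₂ ∘ B₁ holds, at every point where all denominators occurring in both composite maps are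 nonzero. -/
/-!
`B₁` and `B₂` fix `f₀` and `f₃` and act on the pair `(f₁, f₂)` through local maps with
boundary values `u₀` and `v₃`, permuting the `αᵢ` in the same way on both sides. Write
`d₁ = 1 − u₀v₂`, `d₂ = 1 − u₁v₃`, `X = d₁d₂ + (α₂−α₃)u₀v₃` and `Y = d₁d₂ − (α₁−α₂)u₀v₃`.
The denominators of the second and third steps are `X/d₂`, `d₂Y/X` in `B₂B₁B₂` and
`Y/d₁`, `d₁X/Y` in `B₁B₂B₁`. Once these are cleared, the two sides agree as polynomials; the
key relation is `(α₁−α₂)X + (α₂−α₃)Y = (α₁−α₃)d₁d₂`.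
-/

noncomputable section

/-- Data `((f₀,f₁,f₂,f₃),(α₁,α₂,α₃))` on four consecutive chain sites:
`fⱼ = (uⱼ,vⱼ) ∈ ℂ²` and edge parameters `α₁,α₂,α₃ ∈ ℂ`. -/
abbrev T : Type := (ℂ × ℂ) × (ℂ × ℂ) × (ℂ × ℂ) × (ℂ × ℂ) × (ℂ × ℂ × ℂ)

/-- The Adler–Yamilov transformation `B₁`: replaces `f₁` by
`(u₁ + (α₁−α₂)·u₀/(1−u₀·v₂), v₁ − (α₁−α₂)·v₂/(1−u₀·v₂))` and swaps `α₁ ↔ α₂`. -/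
def B1 (w : T) : T :=
  (w.1,
   (w.2.1.1 + (w.2.2.2.2.1 - w.2.2.2.2.2.1) * w.1.1 / (1 - w.1.1 * w.2.2.1.2),
    w.2.1.2 - (w.2.2.2.2.1 - w.2.2.2.2.2.1) * w.2.2.1.2 / (1 - w.1.1 * w.2.2.1.2)),
   w.2.2.1, w.2.2.2.1,
   (w.2.2.2.2.2.1, w.2.2.2.2.1, w.2.2.2.2.2.2))

/-- The Adler–Yamilov transformation `B₂`: replaces `f₂` by
`(u₂ + (α₂−α₃)·u₁/(1−u₁·v₃), v₂ − (α₂−α₃)·v₃/(1−u₁·v₃))` and swaps `α₂ ↔ α₃`. -/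
def B2 (w : T) : T :=
  (w.1, w.2.1,
   (w.2.2.1.1 + (w.2.2.2.2.2.1 - w.2.2.2.2.2.2) * w.2.1.1 / (1 - w.2.1.1 * w.2.2.2.1.2),
    w.2.2.1.2 - (w.2.2.2.2.2.1 - w.2.2.2.2.2.2) * w.2.2.2.1.2 / (1 - w.2.1.1 * w.2.2.2.1.2)),
   w.2.2.2.1,
   (w.2.2.2.2.1, w.2.2.2.2.2.2, w.2.2.2.2.2.1))

/-- The denominator of `B₁` is nonzero at `w`: `1 − u₀·v₂ ≠ 0`. -/
def D1 (w : T) : Prop := 1 - w.1.1 * w.2.2.1.2 ≠ 0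

/-- The denominator of `B₂` is nonzero at `w`: `1 − u₁·v₃ ≠ 0`. -/
def D2 (w : T) : Prop := 1 - w.2.1.1 * w.2.2.2.1.2 ≠ 0

namespace AdlerYamilov

variable {K : Type*} [Field K]

/-- The update of `f_k` by `𝔹_k`, with `u = u_{k-1}`, `v = v_{k+1}` and `c = α_{k-1} − α_k`. -/
def step (c u v : K) (f : K × K) : K × K :=
  (f.1 + c * u / (1 - u * v), f.2 - c * v / (1 - u * v))

def stepFst (u c : K) (x : (K × K) × (K × K)) : (K × K) × (K × K) :=
  (step c u x.2.2 x.1, x.2)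

def stepSnd (v c : K) (x : (K × K) × (K × K)) : (K × K) × (K × K) :=
  (x.1, step c x.1.1 v x.2)

theorem step_eq_of_one_sub_mul_eq {c u v d : K} (h : 1 - u * v = d) (f : K × K) :
    step c u v f = (f.1 + c * u / d, f.2 - c * v / d) := by
  rw [step, h]

theorem one_sub_mul_step_snd {c a u v d : K} (hd : 1 - a * v = d) (h : d ≠ 0) (g : K × K) :
    1 - u * (step c a v g).2 = ((1 - u * g.2) * d + c * u * v) / d := by
  rw [step_eq_of_one_sub_mul_eq hd]
  field_simp
  ring

theorem one_sub_step_fst_mul {c u b v d : K} (hd : 1 - u * b = d) (h : d ≠ 0) (f : K × K) :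
    1 - (step c u b f).1 * v = (d * (1 - f.1 * v) - c * u * v) / d := by
  rw [step_eq_of_one_sub_mul_eq hd]
  field_simp
  ring

theorem stepSnd_stepFst_stepSnd (u v a b c : K) (f g : K × K)
    (hf : 1 - f.1 * v ≠ 0) (hg : 1 - u * g.2 ≠ 0)
    (hfg : 1 - u * (step (b - c) f.1 v g).2 ≠ 0)
    (hgf : 1 - (step (a - b) u g.2 f).1 * v ≠ 0) :
    stepSnd v (a - b) (stepFst u (a - c) (stepSnd v (b - c) (f, g))) =
      stepFst u (b - c) (stepSnd v (a - c) (stepFst u (a - b) (f, g))) := by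
  set d₁ := 1 - u * g.2 with hd₁
  set d₂ := 1 - f.1 * v with hd₂
  set X := d₁ * d₂ + (b - c) * u * v with hX
  set Y := d₁ * d₂ - (a - b) * u * v with hY
  have eL2 : 1 - u * (step (b - c) f.1 v g).2 = X / d₂ := by
    rw [one_sub_mul_step_snd hd₂.symm hf]
  have eR2 : 1 - (step (a - b) u g.2 f).1 * v = Y / d₁ := by
    rw [one_sub_step_fst_mul hd₁.symm hg]
  have hX0 : X ≠ 0 := fun h => hfg (by rw [eL2, h, zero_div])
  have hY0 : Y ≠ 0 := fun h => hgf (by rw [eR2, h, zero_div])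
  have eL3 : 1 - (step (a - c) u (step (b - c) f.1 v g).2 f).1 * v = d₂ * Y / X := by
    rw [one_sub_step_fst_mul eL2 (div_ne_zero hX0 hf)]
    field_simp
    ring
  have eR3 : 1 - u * (step (a - c) (step (a - b) u g.2 f).1 v g).2 = d₁ * X / Y := by
    rw [one_sub_mul_step_snd eR2 (div_ne_zero hY0 hg)]
    field_simp
    ring
  simp only [stepFst, stepSnd]
  rw [step_eq_of_one_sub_mul_eq eL3, step_eq_of_one_sub_mul_eq eL2,
    step_eq_of_one_sub_mul_eq hd₂.symm, step_eq_of_one_sub_mul_eq eR3,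
    step_eq_of_one_sub_mul_eq eR2, step_eq_of_one_sub_mul_eq hd₁.symm]
  -- With the denominators opaque, `field_simp` clears them using `hf`, `hg`, `hX0`, `hY0`.
  clear_value X Y d₁ d₂
  refine Prod.ext (Prod.ext ?_ ?_) (Prod.ext ?_ ?_) <;> field_simp <;>
    subst X Y d₁ d₂ <;> ring

end AdlerYamilov

open AdlerYamilov

theorem B1_apply (f₀ f₁ f₂ f₃ : ℂ × ℂ) (a₁ a₂ a₃ : ℂ) :
    B1 (f₀, f₁, f₂, f₃, a₁, a₂, a₃) =
      (f₀, (stepFst f₀.1 (a₁ - a₂) (f₁, f₂)).1, (stepFst f₀.1 (a₁ - a₂) (f₁, f₂)).2, f₃,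
        a₂, a₁, a₃) :=
  rfl

theorem B2_apply (f₀ f₁ f₂ f₃ : ℂ × ℂ) (a₁ a₂ a₃ : ℂ) :
    B2 (f₀, f₁, f₂, f₃, a₁, a₂, a₃) =
      (f₀, (stepSnd f₃.2 (a₂ - a₃) (f₁, f₂)).1, (stepSnd f₃.2 (a₂ - a₃) (f₁, f₂)).2, f₃,
        a₁, a₃, a₂) :=
  rfl

theorem braid_relation_general (w : T)
    (hL1 : D2 w) (hL2 : D1 (B2 w))
    (hR1 : D1 w) (hR2 : D2 (B1 w)) :
    B2 (B1 (B2 w)) = B1 (B2 (B1 w)) := by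
  obtain ⟨f₀, f₁, f₂, f₃, a₁, a₂, a₃⟩ := w
  simp only [B1_apply, B2_apply, Prod.mk.eta]
  rw [stepSnd_stepFst_stepSnd f₀.1 f₃.2 a₁ a₂ a₃ f₁ f₂ hL1 hR1 hL2 hR2]

/-- The braid relation `B₂ ∘ B₁ ∘ B₂ = B₁ ∘ B₂ ∘ B₁` for the Adler–Yamilov
transformations, at every point where all denominators occurring in both
composite maps are nonzero. -/
theorem braid_relation (w : T)
    (hL1 : D2 w) (hL2 : D1 (B2 w)) (hL3 : D2 (B1 (B2 w)))
    (hR1 : D1 w) (hR2 : D2 (B1 w)) (hR3 : D1 (B2 (B1 w))) :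
    B2 (B1 (B2 w)) = B1 (B2 (B1 w)) :=
  braid_relation_general w hL1 hL2 hR1 hR2
end
end

section
/- Let β1,β2 ∈ ℂ and let u, u_{(1)}, u_{(2)}, v, v_{(2)}, u_{(1,2)}, v_{(1,2)} ∈ ℂ satisfy the system E5 with δ = 0 and γᵢ = βᵢ, namely u_{(1,2)} = ((β1−β2)·u_{(1)}·v_{(2)} + u·(β2·u_{(1)} + β1·v_{(2)}))/((β1−β2)·u + β1·u_{(1)} + β2·v_{(2)}) and v_{(1,2)} = ((β2−β1)·v_{(2)}·u_{(1)} + v·(β1·v_{(2)} + β2·u_{(1)}))/((β2−β1)·v + β2·v_{(2)} + β1·u_{(1)}), with all denominators nonzero. Then the gauge-transformed values û = σ(n1,n2)·u, û_{(1)} = σ(n1+1,n2)·u_{(1)}, û_{(2)} = σ(n1,n2+1)·u_{(2)}, û_{(1,2)} = σ(n1+1,n2+1)·u_{(1,2)} (and similarly for v), where σ(n1,n2) = (−1)^{n1+n2}, satisfy the system E4 with ε = 0: û_{(1,2)} = û + (1/β1 − 1/β2)·β1·β2·(û+v̂_{(2)})·(û_{(1)}−û)/(β2·(û+v̂_{(2)})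 + β1·(û_{(1)}−û)) and the companion equation for v̂_{(1,2)} obtained by exchanging the roles of u and v and of β1 and β2. -/
noncomputable section

/-- The gauge transformation `(u,v) ↦ (−1)^{n1+n2}·(u,v)` maps solutions of
system `E5` with `δ = 0`, `γᵢ = βᵢ` to solutions of system `E4` with `ε = 0`:
if `u₍₁,₂₎ = ((β1−β2)·u₍₁₎·v₍₂₎ + u·(β2·u₍₁₎+β1·v₍₂₎))/((β1−β2)·u + β1·u₍₁₎ + β2·v₍₂₎)`
and `v₍₁,₂₎ = ((β2−β1)·v₍₂₎·u₍₁₎ + v·(β1·v₍₂₎+β2·u₍₁₎))/((β2−β1)·v + β2·v₍₂₎ + β1·u₍₁₎)`,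
then the gauge-transformed values `û = σ(n1,n2)·u`, `û₍₁₎ = σ(n1+1,n2)·u₍₁₎`,
`v̂₍₂₎ = σ(n1,n2+1)·v₍₂₎`, `û₍₁,₂₎ = σ(n1+1,n2+1)·u₍₁,₂₎` (and similarly for `v`),
with `σ(n1,n2) = (−1)^{n1+n2}`, satisfy
`û₍₁,₂₎ = û + (1/β1−1/β2)·β1·β2·(û+v̂₍₂₎)·(û₍₁₎−û)/(β2·(û+v̂₍₂₎)+β1·(û₍₁₎−û))`
and the companion equation for `v̂₍₁,₂₎` with the roles of `u,v` and `β1,β2`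
exchanged. -/
theorem gauge_E5_to_E4 (β1 β2 : ℂ) (hβ1 : β1 ≠ 0) (hβ2 : β2 ≠ 0) (n1 n2 : ℤ)
    (u u1 u2 v v2 u12 v12 : ℂ)
    (hd1 : (β1 - β2) * u + β1 * u1 + β2 * v2 ≠ 0)
    (hd2 : (β2 - β1) * v + β2 * v2 + β1 * u1 ≠ 0)
    (he1 : u12 = ((β1 - β2) * u1 * v2 + u * (β2 * u1 + β1 * v2)) /
        ((β1 - β2) * u + β1 * u1 + β2 * v2))
    (he2 : v12 = ((β2 - β1) * v2 * u1 + v * (β1 * v2 + β2 * u1)) /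
        ((β2 - β1) * v + β2 * v2 + β1 * u1))
    (tu tu1 tv tv2 tu12 tv12 : ℂ)
    (htu : tu = (-1 : ℂ) ^ (n1 + n2) * u)
    (htu1 : tu1 = (-1 : ℂ) ^ (n1 + 1 + n2) * u1)
    (htv : tv = (-1 : ℂ) ^ (n1 + n2) * v)
    (htv2 : tv2 = (-1 : ℂ) ^ (n1 + (n2 + 1)) * v2)
    (htu12 : tu12 = (-1 : ℂ) ^ (n1 + 1 + (n2 + 1)) * u12)
    (htv12 : tv12 = (-1 : ℂ) ^ (n1 + 1 + (n2 + 1)) * v12)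
    (hd3 : β2 * (tu + tv2) + β1 * (tu1 - tu) ≠ 0)
    (hd4 : β1 * (tv + tu1) + β2 * (tv2 - tv) ≠ 0) :
    tu12 = tu + (1 / β1 - 1 / β2) * (β1 * β2 * (tu + tv2) * (tu1 - tu)) /
        (β2 * (tu + tv2) + β1 * (tu1 - tu)) ∧
      tv12 = tv + (1 / β2 - 1 / β1) * (β2 * β1 * (tv + tu1) * (tv2 - tv)) /
        (β1 * (tv + tu1) + β2 * (tv2 - tv)) := by
  set s : ℂ := (-1 : ℂ) ^ (n1 + n2) with hs
  have hsne : s ≠ 0 := by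
    rw [hs]; exact zpow_ne_zero _ (by norm_num)
  have hp1 : (-1 : ℂ) ^ (n1 + 1 + n2) = -s := by
    rw [hs, show n1 + 1 + n2 = (n1 + n2) + 1 by ring, zpow_add₀ (by norm_num : (-1:ℂ) ≠ 0)]
    ring
  have hp2 : (-1 : ℂ) ^ (n1 + (n2 + 1)) = -s := by
    rw [hs, show n1 + (n2 + 1) = (n1 + n2) + 1 by ring, zpow_add₀ (by norm_num : (-1:ℂ) ≠ 0)]
    ring
  have hp3 : (-1 : ℂ) ^ (n1 + 1 + (n2 + 1)) = s := by
    rw [hs, show n1 + 1 + (n2 + 1) = (n1 + n2) + 2 by ring, zpow_add₀ (by norm_num : (-1:ℂ) ≠ 0)]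
    norm_num
  rw [hp1] at htu1
  rw [hp2] at htv2
  rw [hp3] at htu12 htv12
  subst he1 he2 htu htu1 htv htv2 htu12 htv12
  constructor
  · rw [show β2 * (s * u + -s * v2) + β1 * (-s * u1 - s * u)
        = (-s) * ((β1 - β2) * u + β1 * u1 + β2 * v2) by ring]
    field_simp
    ring
  · rw [show β1 * (s * v + -s * u1) + β2 * (-s * v2 - s * v)
        = (-s) * ((β2 - β1) * v + β2 * v2 + β1 * u1) by ring]
    field_simp
    ring
end
end
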